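/- If F is a grounded family of curves with χ(F) > 2(β+1), where β ≥ 0 is a natural number, then there are two intersecting curves u, v ∈ F with u ≺ v such that χ(F(u,v)) > β. -/

import Mathlib

open Set

attribute [local instance] Classical.propDecidable

abbrev Pt : Type := ℝ × ℝ

/-- The closed upper halfplane. -/
def upperH : Set Pt := {p | 0 ≤ p.2}

/-- A curve: image of a continuous map from `[0,1]` to the plane. -/
def IsCurve (c : Set Pt) : Prop :=
  ∃ f : ℝ → Pt, ContinuousOn f (Set.Icc 0 1) ∧ f '' Set.Icc 0 1 = c

/-- A grounded curve: contained in the upper halfplane, meeting the baseline in exactly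
one point which is an endpoint of the curve. -/
def IsGroundedCurve (c : Set Pt) : Prop :=
  (∃ f : ℝ → Pt, ContinuousOn f (Set.Icc 0 1) ∧ f '' Set.Icc 0 1 = c ∧ (f 0).2 = 0) ∧
  c ⊆ upperH ∧ (∃! p : Pt, p ∈ c ∧ p.2 = 0)

/-- The (unique) point of a grounded curve on the baseline. -/
noncomputable def basepoint (c : Set Pt) : Pt :=
  if h : ∃ p : Pt, p ∈ c ∧ p.2 = 0 then h.choose else (0, 0)

/-- A grounded family of curves. -/
def IsGrounded (F : Set (Set Pt)) : Prop :=
  F.Finite ∧ (∀ c ∈ F, IsGroundedCurve c) ∧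
  ∀ c ∈ F, ∀ d ∈ F, c ≠ d → basepoint c ≠ basepoint d

/-- `prec u v` : the basepoint of `u` lies to the left of that of `v`. -/
def prec (u v : Set Pt) : Prop := (basepoint u).1 < (basepoint v).1

/-- `F(u,v)`: the curves of `F` between `u` and `v`. -/
def between (F : Set (Set Pt)) (u v : Set Pt) : Set (Set Pt) :=
  {c | c ∈ F ∧ prec u c ∧ prec c v}

/-- A proper coloring of the intersection graph of `F` with `m` colors. -/
def Colorable (F : Set (Set Pt)) (m : ℕ) : Prop :=
  ∃ φ : Set Pt → ℕ, (∀ c ∈ F, φ c < m) ∧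
    ∀ c ∈ F, ∀ d ∈ F, c ≠ d → (c ∩ d).Nonempty → φ c ≠ φ d

/-- Chromatic number of the intersection graph of `F`. -/
noncomputable def chi (F : Set (Set Pt)) : ℕ := sInf {m | Colorable F m}

/-- `ω(F) ≤ k`: every clique (set of pairwise intersecting members) has at most `k` members. -/
def cliqueLE (F : Set (Set Pt)) (k : ℕ) : Prop :=
  ∀ K : Finset (Set Pt), ↑K ⊆ F →
    (∀ c ∈ K, ∀ d ∈ K, c ≠ d → (c ∩ d).Nonempty) → K.card ≤ k

/-- Points of `upperH \ W` whose path-component in `upperH \ W` is unbounded. -/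
def extOf (W : Set Pt) : Set Pt :=
  {x | x ∈ upperH \ W ∧ ¬ Bornology.IsBounded (pathComponentIn (upperH \ W) x)}

/-- The exterior of a family of curves. -/
def extFam (F : Set (Set Pt)) : Set Pt := extOf (⋃₀ F)

/-- A chosen parametrization of a grounded curve by `[0,1]` starting at its basepoint. -/
noncomputable def param (c : Set Pt) : ℝ → Pt :=
  if h : ∃ f : ℝ → Pt, ContinuousOn f (Set.Icc 0 1) ∧ f '' Set.Icc 0 1 = c ∧ f 0 = basepoint c
  then h.choose else fun _ => (0, 0)

/-- `t₀ = inf {t : c(t) ∈ A}` for the chosen parametrization of `c`. -/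
noncomputable def firstTime (c A : Set Pt) : ℝ :=
  sInf {t | t ∈ Set.Icc (0:ℝ) 1 ∧ param c t ∈ A}

/-- The first point of `c` on `A`. -/
noncomputable def firstPoint (c A : Set Pt) : Pt := param c (firstTime c A)

/-- The portion of `c` from its basepoint up to and including its first point on `A`. -/
noncomputable def portionTo (c A : Set Pt) : Set Pt :=
  param c '' Set.Icc 0 (firstTime c A)

/-- The portion of `c` from its basepoint strictly before its first point on `A`. -/
noncomputable def portionBefore (c A : Set Pt) : Set Pt :=
  param c '' Set.Ico 0 (firstTime c A)

/-- The initial portion of `c` up to `A`; all of `c` if `c` is disjoint from `A`. -/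
noncomputable def initialPortion (c A : Set Pt) : Set Pt :=
  if (c ∩ A).Nonempty then portionTo c A else c

/-- A skeleton `(u,v,S)` in `F`. -/
def IsSkeleton (F : Set (Set Pt)) (u v : Set Pt) (S : Set (Set Pt)) : Prop :=
  u ∈ F ∧ v ∈ F ∧ prec u v ∧ (u ∩ v).Nonempty ∧ S ⊆ between F u v ∧
  ∀ s ∈ S, ∀ s' ∈ S, s ≠ s' → s ∩ s' = ∅

/-- `P` is supported by the skeleton `(u,v,S)`. -/
def SupportedBy (F : Set (Set Pt)) (u v : Set Pt) (S P : Set (Set Pt)) : Prop :=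
  P ⊆ between F u v ∧
  (∀ p ∈ P, p ∩ u = ∅ ∧ p ∩ v = ∅) ∧
  ∀ p ∈ P, ∃ s ∈ S, (p ∩ initialPortion s (u ∪ v)).Nonempty

/-- The data of a bracket: the families `P`, `S` and the selection `p ↦ s(p)`. -/
structure CBracket where
  P : Set (Set Pt)
  S : Set (Set Pt)
  sel : Set Pt → Set Pt

/-- `(P,S)` (with selection `sel`) is a bracket in `F`. -/
def IsCBracket (F : Set (Set Pt)) (B : CBracket) : Prop :=
  B.P ⊆ F ∧ B.S ⊆ F ∧
  ((∀ p ∈ B.P, ∀ s ∈ B.S, prec p s) ∨ (∀ p ∈ B.P, ∀ s ∈ B.S, prec s p)) ∧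
  (∀ p ∈ B.P, ∃ s ∈ B.S, (p ∩ s).Nonempty) ∧
  (∀ p ∈ B.P, B.sel p ∈ B.S ∧ firstPoint p (⋃₀ B.S) ∈ B.sel p) ∧
  ∀ s ∈ B.S, ∃ p ∈ B.P, firstPoint p (⋃₀ B.S) ∈ s

/-- `I(p)`: points of `upperH` not in any unbounded path-component of
`upperH \ (p' ∪ s(p) ∪ B(p))`. -/
noncomputable def CBracket.regionOf (B : CBracket) (p : Set Pt) : Set Pt :=
  upperH \ extOf (portionBefore p (⋃₀ B.S) ∪ B.sel p ∪
    segment ℝ (basepoint p) (basepoint (B.sel p)))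

/-- The interior `I` of a bracket. -/
noncomputable def CBracket.inter (B : CBracket) : Set Pt := ⋂ p ∈ B.P, B.regionOf p

/-- The exterior `E` of a bracket. -/
def CBracket.exter (B : CBracket) : Set Pt := extOf (⋃₀ (B.P ∪ B.S))

/-- An `n`-bracket system in `F`. -/
def IsCBracketSystem (F : Set (Set Pt)) {n : ℕ} (B : Fin n → CBracket) : Prop :=
  (∀ i, IsCBracket F (B i)) ∧
  (∀ i, ∀ p ∈ (B i).P, ∀ j, i < j → p ⊆ (B j).inter) ∧
  ∀ i, ∀ s ∈ (B i).S, (s ∩ ⋂ j ∈ {j | i < j}, (B j).exter).Nonempty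

/-- A clique in `F` (a finite set of pairwise intersecting curves of `F`). -/
def IsCliqueIn (F : Set (Set Pt)) (K : Finset (Set Pt)) : Prop :=
  ↑K ⊆ F ∧ ∀ c ∈ K, ∀ d ∈ K, c ≠ d → (c ∩ d).Nonempty

/-- `ℓ(K)`: the curve of `K` with leftmost basepoint. -/
noncomputable def lcur (K : Finset (Set Pt)) : Set Pt :=
  if h : ∃ c ∈ K, ∀ d ∈ K, d ≠ c → prec c d then h.choose else ∅

/-- `r(K)`: the curve of `K` with second leftmost basepoint. -/
noncomputable def rcur (K : Finset (Set Pt)) : Set Pt :=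
  if h : ∃ c ∈ K, c ≠ lcur K ∧ ∀ d ∈ K, d ≠ c → d ≠ lcur K → prec c d
  then h.choose else ∅

/-- `ℓ'(K)`: portion of `ℓ(K)` up to and including its first point on `r(K)`. -/
noncomputable def lport (K : Finset (Set Pt)) : Set Pt := portionTo (lcur K) (rcur K)

/-- `r'(K)`: portion of `r(K)` strictly before its first point on `ℓ'(K)`. -/
noncomputable def rport (K : Finset (Set Pt)) : Set Pt := portionBefore (rcur K) (lport K)

/-- `s` is left for `K`. -/
def leftFor (K : Finset (Set Pt)) (s : Set Pt) : Prop :=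
  (s ∩ lport K).Nonempty ∧ portionTo s (lport K) ∩ rport K = ∅

/-- `s` is right for `K`. -/
def rightFor (K : Finset (Set Pt)) (s : Set Pt) : Prop :=
  (s ∩ rport K).Nonempty ∧ portionTo s (rport K) ∩ lport K = ∅

/-- A `(k₁,…,kₙ)`-clique system in `F`. -/
def IsCliqueSystem (F : Set (Set Pt)) {n : ℕ} (ks : Fin n → ℕ)
    (K : Fin n → Finset (Set Pt)) : Prop :=
  (∀ i, IsCliqueIn F (K i) ∧ (K i).card = ks i) ∧
  ∀ i j : Fin n, i < j →
    ↑(K j) ⊆ between F (lcur (K i)) (rcur (K i)) ∧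
    (∀ s ∈ K j, (s ∩ (lport (K i) ∪ rport (K i))).Nonempty) ∧
    ((∀ s ∈ K j, leftFor (K i) s) ∨ (∀ s ∈ K j, rightFor (K i) s))

/-- `s` crosses the clique system `K`. -/
def Crosses (F : Set (Set Pt)) {n : ℕ} (K : Fin (n+1) → Finset (Set Pt)) (s : Set Pt) : Prop :=
  s ∈ between F (lcur (K (Fin.last n))) (rcur (K (Fin.last n))) ∧
  (s ∩ extOf (⋃ i, ⋃₀ (↑(K i) : Set (Set Pt)))).Nonempty

/-!
Order the curves by the abscissae of their basepoints and cut this sequence greedily into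
consecutive blocks, each as long as possible subject to having chromatic number at most `β + 1`.
If `χ(F(u,v)) ≤ β` for all intersecting `u ≺ v`, a curve can meet only curves of its own block
or of the two adjacent ones: otherwise a whole block would lie in `F(u,v)`, and by maximality
of the greedy cut that block has chromatic number `> β`. Coloring the blocks alternately from
two disjoint palettes of `β + 1` colors then shows `χ(F) ≤ 2(β + 1)`.
-/

def IsColoring (A : Set (Set Pt)) (m : ℕ) (φ : Set Pt → ℕ) : Prop :=
  (∀ c ∈ A, φ c < m) ∧ ∀ c ∈ A, ∀ d ∈ A, c ≠ d → (c ∩ d).Nonempty → φ c ≠ φ d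

theorem Colorable.subset {A B : Set (Set Pt)} {m : ℕ} (h : Colorable B m) (hAB : A ⊆ B) :
    Colorable A m := by
  obtain ⟨φ, hlt, hprop⟩ := h
  exact ⟨φ, fun c hc => hlt c (hAB hc), fun c hc d hd => hprop c (hAB hc) d (hAB hd)⟩

theorem Colorable.mono {A : Set (Set Pt)} {m m' : ℕ} (h : Colorable A m) (hm : m ≤ m') :
    Colorable A m' := by
  obtain ⟨φ, hlt, hprop⟩ := h
  exact ⟨φ, fun c hc => (hlt c hc).trans_le hm, hprop⟩

theorem Set.Finite.exists_colorable {A : Set (Set Pt)} (hA : A.Finite) :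
    ∃ m, Colorable A m := by
  refine ⟨hA.toFinset.toList.length, fun c => hA.toFinset.toList.idxOf c, ?_, ?_⟩
  · intro c hc
    exact List.idxOf_lt_length_iff.2 (by simp [hc])
  · intro c hc d _ hne _ heq
    exact hne ((List.idxOf_inj (by simp [hc])).1 heq)

theorem colorable_chi {A : Set (Set Pt)} (hA : A.Finite) : Colorable A (chi A) :=
  Nat.sInf_mem hA.exists_colorable

theorem chi_le_of_colorable {A : Set (Set Pt)} {m : ℕ} (h : Colorable A m) : chi A ≤ m :=
  Nat.sInf_le h

theorem chi_mono {A B : Set (Set Pt)} (hB : B.Finite) (hAB : A ⊆ B) : chi A ≤ chi B :=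
  chi_le_of_colorable ((colorable_chi hB).subset hAB)

theorem chi_empty : chi ∅ = 0 :=
  Nat.le_zero.1 (chi_le_of_colorable ⟨fun _ => 0, by simp, by simp⟩)

theorem chi_insert_le {A : Set (Set Pt)} (hA : A.Finite) (c : Set Pt) :
    chi (insert c A) ≤ chi A + 1 := by
  obtain ⟨φ, hlt, hprop⟩ := colorable_chi hA
  refine chi_le_of_colorable ⟨fun x => if x ∈ A then φ x else chi A, ?_, ?_⟩
  · intro x _
    dsimp only
    split_ifs with hx
    · exact (hlt x hx).trans (Nat.lt_succ_self _)
    · exact Nat.lt_succ_self _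
  · rintro x hx y hy hne hxy
    by_cases hxA : x ∈ A <;> by_cases hyA : y ∈ A <;> simp only [hxA, hyA, if_true, if_false]
    · exact hprop x hxA y hyA hne hxy
    · exact (hlt x hxA).ne
    · exact (hlt y hyA).ne'
    · exact absurd (((mem_insert_iff.1 hx).resolve_right hxA).trans
        ((mem_insert_iff.1 hy).resolve_right hyA).symm) hne

theorem chi_image_Ico_succ_le (g : ℕ → Set Pt) (s e : ℕ) :
    chi (g '' Ico s (e + 1)) ≤ chi (g '' Ico s e) + 1 := by
  have hsub : g '' Ico s (e + 1) ⊆ insert (g e) (g '' Ico s e) := by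
    rintro _ ⟨i, ⟨his, hie⟩, rfl⟩
    rcases Nat.lt_succ_iff_lt_or_eq.1 hie with hie | rfl
    · exact mem_insert_of_mem _ ⟨i, ⟨his, hie⟩, rfl⟩
    · exact mem_insert _ _
  exact (chi_mono (((finite_Ico s e).image g).insert _) hsub).trans
    (chi_insert_le ((finite_Ico s e).image g) _)

theorem IsGroundedCurve.basepoint_snd {c : Set Pt} (hc : IsGroundedCurve c) :
    (basepoint c).2 = 0 := by
  obtain ⟨p, hp, -⟩ := hc.2.2
  have hex : ∃ p : Pt, p ∈ c ∧ p.2 = 0 := ⟨p, hp⟩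
  rw [basepoint, dif_pos hex]
  exact hex.choose_spec.2

theorem IsGrounded.injOn_basepoint_fst {F : Set (Set Pt)} (hF : IsGrounded F) :
    InjOn (fun c => (basepoint c).1) F := by
  intro c hc d hd hcd
  by_contra hne
  refine hF.2.2 c hc d hd hne (Prod.ext hcd ?_)
  rw [(hF.2.1 c hc).basepoint_snd, (hF.2.1 d hd).basepoint_snd]

theorem Set.Finite.exists_enum_strictMono {α β : Type*} [Nonempty α] [LinearOrder β]
    {F : Set α} (hF : F.Finite) {f : α → β} (hf : InjOn f F) :
    ∃ n, ∃ g : ℕ → α, g '' Iio n = F ∧ ∀ i j, i < j → j < n → f (g i) < f (g j) := by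
  classical
  set s := (hF.image f).toFinset
  set e := s.orderEmbOfFin rfl
  have he : ∀ i, ∃ a ∈ F, f a = e i := fun i => by
    simpa [s] using (s.range_orderEmbOfFin rfl).subset (mem_range_self i)
  let g : ℕ → α := fun i =>
    if h : i < s.card then Function.invFunOn f F (e ⟨i, h⟩) else Classical.arbitrary α
  have hg : ∀ i (h : i < s.card), g i ∈ F ∧ f (g i) = e ⟨i, h⟩ := fun i h => by
    simp only [g, dif_pos h]
    exact ⟨Function.invFunOn_mem (he _), Function.invFunOn_eq (he _)⟩
  refine ⟨s.card, g, ?_, fun i j hij hj => ?_⟩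
  · refine Subset.antisymm (image_subset_iff.2 fun i hi => (hg i hi).1) fun a ha => ?_
    obtain ⟨⟨i, hi⟩, hia⟩ : f a ∈ range e := by
      rw [s.range_orderEmbOfFin rfl]; simpa [s] using mem_image_of_mem f ha
    exact ⟨i, hi, hf (hg i hi).1 ha ((hg i hi).2.trans hia)⟩
  · rw [(hg i (hij.trans hj)).2, (hg j hj).2]
    exact e.strictMono hij

section GreedyBlocks

variable (g : ℕ → Set Pt) (β n : ℕ)

noncomputable def greedyBlockEnd (s : ℕ) : ℕ :=
  Nat.findGreatest (fun e => s < e ∧ chi (g '' Ico s e) ≤ β + 1) n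

variable {g β n}

theorem greedyBlockEnd_le (s : ℕ) : greedyBlockEnd g β n s ≤ n :=
  Nat.findGreatest_le n

theorem greedyBlockEnd_spec {s : ℕ} (hs : s < n) :
    s < greedyBlockEnd g β n s ∧ chi (g '' Ico s (greedyBlockEnd g β n s)) ≤ β + 1 := by
  refine Nat.findGreatest_spec (P := fun e => s < e ∧ chi (g '' Ico s e) ≤ β + 1) (m := s + 1)
    hs ⟨s.lt_succ_self, ?_⟩
  have := chi_image_Ico_succ_le g s s
  rw [Ico_self, image_empty, chi_empty] at this
  omega

theorem lt_chi_greedyBlock {s : ℕ} (hs : s < n) (hend : greedyBlockEnd g β n s < n) :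
    β < chi (g '' Ico s (greedyBlockEnd g β n s)) := by
  have hmax := Nat.findGreatest_is_greatest (lt_add_one (greedyBlockEnd g β n s)) hend
  have := chi_image_Ico_succ_le g s (greedyBlockEnd g β n s)
  have := (greedyBlockEnd_spec (g := g) (β := β) hs).1
  simp only [not_and, not_le] at hmax
  specialize hmax (by omega)
  omega

theorem lt_greedyBlockEnd_of_inter
    (hg : ∀ i j, i < j → j < n → (g i ∩ g j).Nonempty → chi (g '' Ioo i j) ≤ β)
    {i j e : ℕ} (hie : i < e) (hej : e ≤ j) (hjn : j < n) (hint : (g i ∩ g j).Nonempty) :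
    j < greedyBlockEnd g β n e := by
  by_contra! hend
  have hsub : g '' Ico e (greedyBlockEnd g β n e) ⊆ g '' Ioo i j :=
    image_mono fun k hk => ⟨by grind, by grind⟩
  have := lt_chi_greedyBlock (g := g) (β := β) (by omega : e < n) (by omega)
  have := chi_mono ((finite_Ioo i j).image g) hsub
  have := hg i j (by omega) hjn hint
  omega

theorem exists_coloring_of_greedyBlocks
    (hg : ∀ i j, i < j → j < n → (g i ∩ g j).Nonempty → chi (g '' Ioo i j) ≤ β)
    (s : ℕ) (hs : s ≤ n) :
    ∃ φ, IsColoring (g '' Ico s n) (2 * (β + 1)) φ ∧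
      ∀ c ∈ g '' Ico s (greedyBlockEnd g β n s), φ c < β + 1 := by
  refine Nat.strong_decreasing_induction ⟨n, fun m hm h => absurd h (by omega)⟩
    (fun s ih hs => ?_) s hs
  rcases hs.eq_or_lt with rfl | hs
  · refine ⟨fun _ => 0, by simp [IsColoring], ?_⟩
    rintro _ ⟨i, ⟨hi, hi'⟩, rfl⟩
    have := greedyBlockEnd_le (g := g) (β := β) (n := s) s
    omega
  set e := greedyBlockEnd g β n s
  obtain ⟨hse, hchi⟩ := greedyBlockEnd_spec (g := g) (β := β) hs
  have hen : e ≤ n := greedyBlockEnd_le s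
  obtain ⟨φ, ⟨hφlt, hφ⟩, hφblock⟩ := ih e hse hen
  obtain ⟨ψ, hψlt, hψ⟩ := (colorable_chi ((finite_Ico s e).image g)).mono hchi
  let swap : ℕ → ℕ := fun x => if x < β + 1 then x + (β + 1) else x - (β + 1)
  have hmem : ∀ c ∈ g '' Ico s n, c ∉ g '' Ico s e → c ∈ g '' Ico e n := by
    rintro _ ⟨i, ⟨hsi, hin⟩, rfl⟩ hi
    exact ⟨i, ⟨not_lt.1 fun hie => hi ⟨i, ⟨hsi, hie⟩, rfl⟩, hin⟩, rfl⟩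
  have hcross : ∀ c ∈ g '' Ico s e, ∀ d ∈ g '' Ico s n, d ∉ g '' Ico s e →
      (c ∩ d).Nonempty → ψ c ≠ swap (φ d) := by
    rintro _ ⟨i, ⟨hsi, hie⟩, rfl⟩ _ ⟨j, ⟨hsj, hjn⟩, rfl⟩ hd hint
    have hej : e ≤ j := not_lt.1 fun hje => hd ⟨j, ⟨hsj, hje⟩, rfl⟩
    have hφj := hφblock _ ⟨j, ⟨hej, lt_greedyBlockEnd_of_inter hg hie hej hjn hint⟩, rfl⟩
    have := hψlt _ ⟨i, ⟨hsi, hie⟩, rfl⟩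
    simp only [swap, if_pos hφj]
    omega
  refine ⟨fun c => if c ∈ g '' Ico s e then ψ c else swap (φ c), ⟨?_, ?_⟩, ?_⟩
  · intro c hc
    dsimp only
    split_ifs with h
    · have := hψlt c h
      omega
    · have := hφlt c (hmem c hc h)
      simp only [swap]
      split_ifs <;> omega
  · intro c hc d hd hne hint
    dsimp only
    split_ifs with hcb hdb hdb
    · exact hψ c hcb d hdb hne hint
    · exact hcross c hcb d hd hdb hint
    · exact (hcross d hdb c hc hcb (inter_comm c d ▸ hint)).symm
    · have := hφ c (hmem c hc hcb) d (hmem d hd hdb) hne hint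
      have := hφlt c (hmem c hc hcb)
      have := hφlt d (hmem d hd hdb)
      simp only [swap]
      split_ifs <;> omega
  · intro c hc
    simp only [if_pos hc]
    exact hψlt c hc

theorem chi_image_Iio_le
    (hg : ∀ i j, i < j → j < n → (g i ∩ g j).Nonempty → chi (g '' Ioo i j) ≤ β) :
    chi (g '' Iio n) ≤ 2 * (β + 1) := by
  obtain ⟨φ, hφ, -⟩ := exists_coloring_of_greedyBlocks hg 0 n.zero_le
  rw [← Ico_bot]
  exact chi_le_of_colorable ⟨φ, hφ⟩

end GreedyBlocks

/-- Corollary of McGuinness' lemma. -/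
theorem mcguinness_corollary (F : Set (Set Pt)) (hF : IsGrounded F) (β : ℕ)
    (hchi : 2 * (β + 1) < chi F) :
    ∃ u ∈ F, ∃ v ∈ F, prec u v ∧ (u ∩ v).Nonempty ∧
      β < chi (between F u v) := by
  by_contra! hsmall
  obtain ⟨n, g, hgF, hg⟩ := hF.1.exists_enum_strictMono hF.injOn_basepoint_fst
  have hmem : ∀ i < n, g i ∈ F := fun i hi => hgF ▸ mem_image_of_mem g hi
  have hgaps : ∀ i j, i < j → j < n → (g i ∩ g j).Nonempty → chi (g '' Ioo i j) ≤ β := by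
    intro i j hij hjn hint
    refine (chi_mono (hF.1.subset fun c hc => hc.1) ?_).trans
      (hsmall _ (hmem i (hij.trans hjn)) _ (hmem j hjn) (hg i j hij hjn) hint)
    rintro _ ⟨k, ⟨hik, hkj⟩, rfl⟩
    exact ⟨hmem k (hkj.trans hjn), hg i k hik (hkj.trans hjn), hg k j hkj hjn⟩
  have := chi_image_Iio_le hgaps
  rw [hgF] at this
  omega
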